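/- A centrally symmetric n-dimensional polytope P ⊂ ℝⁿ with exactly 2n vertices is affinely equivalent (in fact linearly equivalent) to the n-dimensional cross-polytope conv{±e_1,…,±e_n}. -/

import Mathlib

/-!
The extreme points `E` of `P` are finitely many, symmetric, span `ℝⁿ` and have convex hull `P`.
A basis `b` of `ℝⁿ` can be chosen inside `E`; then `±b` are `2n` distinct points of `E`, so they
are all of `E`, and the linear map `eᵢ ↦ bᵢ` sends the cross-polytope onto `conv E = P`.
-/

/-- A polytope: the convex hull of a finite set. -/
def IsPolytope (n : ℕ) (P : Set (Fin n → ℝ)) : Prop :=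
  ∃ s : Finset (Fin n → ℝ), P = convexHull ℝ (s : Set (Fin n → ℝ))

/-- The i-th standard basis vector of ℝⁿ. -/
noncomputable def eVec (n : ℕ) (i : Fin n) : Fin n → ℝ := Pi.single i 1

/-- The n-dimensional cross-polytope conv{±e₁,…,±eₙ}. -/
noncomputable def crossPolytope (n : ℕ) : Set (Fin n → ℝ) :=
  convexHull ℝ {x | ∃ i : Fin n, x = eVec n i ∨ x = -eVec n i}

open Set Module

theorem extremePoints_neg {𝕜 V : Type*} [Ring 𝕜] [PartialOrder 𝕜] [IsOrderedRing 𝕜]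
    [AddCommGroup V] [Module 𝕜 V] (s : Set V) : extremePoints 𝕜 (-s) = -extremePoints 𝕜 s := by
  simpa using (image_extremePoints (LinearEquiv.neg 𝕜 (M := V)) s).symm

section Span

variable {k V : Type*} [Ring k] [AddCommGroup V] [Module k V]

theorem vectorSpan_le_span (s : Set V) : vectorSpan k s ≤ Submodule.span k s := by
  rw [vectorSpan_def, Submodule.span_le]
  rintro _ ⟨a, ha, b, hb, rfl⟩
  exact sub_mem (Submodule.subset_span ha) (Submodule.subset_span hb)

theorem span_eq_top_of_affineSpan_eq_top {s : Set V} (hs : affineSpan k s = ⊤) :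
    Submodule.span k s = ⊤ :=
  top_unique <| AffineSubspace.vectorSpan_eq_top_of_affineSpan_eq_top k V V hs ▸
    vectorSpan_le_span s

end Span

section KreinMilman

variable {V : Type*} [AddCommGroup V] [Module ℝ V] [TopologicalSpace V] [T2Space V]
  [IsTopologicalAddGroup V] [ContinuousSMul ℝ V] [LocallyConvexSpace ℝ V]

theorem Set.Finite.convexHull_extremePoints_convexHull {s : Set V} (hs : s.Finite) :
    convexHull ℝ (extremePoints ℝ (convexHull ℝ s)) = convexHull ℝ s := by
  have hfin : (extremePoints ℝ (convexHull ℝ s)).Finite :=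
    hs.subset extremePoints_convexHull_subset
  rw [← (hfin.isCompact_convexHull ℝ).isClosed.closure_eq]
  exact closure_convexHull_extremePoints (hs.isCompact_convexHull ℝ) (convex_convexHull ℝ s)

end KreinMilman

namespace Module.Basis

variable {ι R M : Type*} [Ring R] [Nontrivial R] [AddCommGroup M] [IsAddTorsionFree M]
  [Module R M]

theorem apply_ne_neg_apply (b : Basis ι R M) (i j : ι) : b i ≠ -b j := by
  intro h
  obtain rfl | hij := eq_or_ne i j
  · exact b.ne_zero i (self_eq_neg.1 h)
  · simpa [Finsupp.single_apply, hij] using congrArg (fun v => b.repr v j) h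

theorem disjoint_range_neg_range (b : Basis ι R M) : Disjoint (range b) (-range b) := by
  rw [Set.disjoint_left]
  rintro _ ⟨i, rfl⟩ ⟨j, hj⟩
  exact b.apply_ne_neg_apply j i hj

theorem ncard_range_union_neg_range [Finite ι] (b : Basis ι R M) :
    (range b ∪ -range b).ncard = 2 * Nat.card ι := by
  rw [ncard_union_eq b.disjoint_range_neg_range (finite_range b) (finite_range b).neg, ncard_neg,
    ncard_range_of_injective b.injective, two_mul]

end Module.Basis

theorem exists_basis_range_union_neg_range_eq {K V : Type*} [DivisionRing K] [AddCommGroup V]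
    [IsAddTorsionFree V] [Module K V] [FiniteDimensional K V] {n : ℕ} (hn : finrank K V = n)
    {E : Set V} (hfin : E.Finite) (hneg : -E = E) (hspan : Submodule.span K E = ⊤)
    (hcard : E.ncard = 2 * n) : ∃ b : Basis (Fin n) K V, range b ∪ -range b = E := by
  let b₀ := Basis.ofSpan hspan.ge
  let b := b₀.reindex (b₀.indexEquiv (finBasisOfFinrankEq K V hn))
  have hsub : range b ⊆ E := by
    rw [Basis.range_reindex]; exact Basis.ofSpan_subset hspan.ge
  refine ⟨b, eq_of_subset_of_ncard_le (union_subset hsub ?_) ?_ hfin⟩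
  · simpa [hneg] using neg_subset_neg.2 hsub
  · rw [hcard, b.ncard_range_union_neg_range, Nat.card_fin]

theorem crossPolytope_eq (n : ℕ) :
    crossPolytope n = convexHull ℝ (range (eVec n) ∪ -range (eVec n)) := by
  refine congrArg _ (ext fun x => ?_)
  constructor
  · rintro ⟨i, rfl | rfl⟩
    exacts [Or.inl ⟨i, rfl⟩, Or.inr ⟨i, (neg_neg _).symm⟩]
  · rintro (⟨i, rfl⟩ | ⟨i, hi⟩)
    exacts [⟨i, .inl rfl⟩, ⟨i, .inr (neg_eq_iff_eq_neg.1 hi.symm)⟩]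

theorem image_crossPolytope {V : Type*} [AddCommGroup V] [Module ℝ V] {n : ℕ}
    (b : Basis (Fin n) ℝ V) :
    b.equivFun.symm '' crossPolytope n = convexHull ℝ (range b ∪ -range b) := by
  have hb : b.equivFun.symm ∘ eVec n = b := funext (Basis.equivFun_symm_single b)
  rw [crossPolytope_eq, ← LinearEquiv.coe_coe, LinearMap.image_convexHull, image_union,
    image_neg, LinearEquiv.coe_coe, ← range_comp, hb]

theorem cs_polytope_two_n_vertices_is_cross_general (n : ℕ)
    (P : Set (Fin n → ℝ)) (hP : IsPolytope n P) (hsym : -P = P)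
    (hdim : affineSpan ℝ P = ⊤)
    (hvert : (Set.extremePoints ℝ P).ncard = 2 * n) :
    ∃ L : (Fin n → ℝ) ≃ₗ[ℝ] (Fin n → ℝ), L '' crossPolytope n = P := by
  obtain ⟨s, rfl⟩ := hP
  set E := extremePoints ℝ (convexHull ℝ (s : Set (Fin n → ℝ)))
  have hhull : convexHull ℝ E = convexHull ℝ ↑s :=
    s.finite_toSet.convexHull_extremePoints_convexHull
  have hneg : -E = E := by rw [← extremePoints_neg, hsym]
  have hspan : Submodule.span ℝ E = ⊤ :=
    span_eq_top_of_affineSpan_eq_top (by rw [← affineSpan_convexHull, hhull, hdim])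
  obtain ⟨b, hb⟩ := exists_basis_range_union_neg_range_eq (finrank_fin_fun ℝ)
    (s.finite_toSet.subset extremePoints_convexHull_subset) hneg hspan hvert
  exact ⟨b.equivFun.symm, by rw [image_crossPolytope, hb, hhull]⟩

/-- A centrally symmetric n-dimensional polytope with exactly 2n vertices is
linearly (in particular affinely) equivalent to the n-dimensional cross-polytope. -/
theorem cs_polytope_two_n_vertices_is_cross (n : ℕ) (hn : 1 ≤ n)
    (P : Set (Fin n → ℝ)) (hP : IsPolytope n P) (hsym : -P = P)
    (hdim : affineSpan ℝ P = ⊤)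
    (hvert : (Set.extremePoints ℝ P).ncard = 2 * n) :
    ∃ L : (Fin n → ℝ) ≃ₗ[ℝ] (Fin n → ℝ), L '' crossPolytope n = P :=
  cs_polytope_two_n_vertices_is_cross_general n P hP hsym hdim hvert
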